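/- The system of two trinomial equations x^5 y^{−1} + a·y = 1, y^5 x^{−1} + a·x = 1 with a = 1.392 has exactly five solutions (x,y) with x > 0 and y > 0. -/

import Mathlib

noncomputable def RP (s : ℝ) : ℝ :=
  30276/15625 - 5268024/1953125*s + 9*s^2 - 3306/125*s^3 + 333036/15625*s^4
    - 8*s^6 + 696/125*s^7 - s^10

noncomputable def RD (s : ℝ) : ℝ :=
  -5268024/1953125 + 18*s - 9918/125*s^2 + 1332144/15625*s^3 - 48*s^5
    + 4872/125*s^6 - 10*s^9


lemma certC1 : ∀ s : ℝ, (9/10 : ℝ) ≤ s → s ≤ (11/10 : ℝ) → RP s < 0 := by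
  intro s h1 h2
  simp only [RP, RD]
  rcases le_or_gt s (1059/1000 : ℝ) with hc | hc
  · have ht0 : (0:ℝ) ≤ s - (9/10 : ℝ) := by linarith
    have hth : s - (9/10 : ℝ) ≤ (159/1000 : ℝ) := by linarith
    have hn1 := pow_nonneg ht0 1
    have hp2 := pow_le_pow_left₀ ht0 hth 2
    have hp3 := pow_le_pow_left₀ ht0 hth 3
    have hn4 := pow_nonneg ht0 4
    have hn5 := pow_nonneg ht0 5
    have hn6 := pow_nonneg ht0 6
    have hn7 := pow_nonneg ht0 7
    have hn8 := pow_nonneg ht0 8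
    have hn9 := pow_nonneg ht0 9
    have hn10 := pow_nonneg ht0 10
    nlinarith [hn1, hp2, hp3, hn4, hn5, hn6, hn7, hn8, hn9, hn10]
  · have ht0 : (0:ℝ) ≤ s - (1059/1000 : ℝ) := by linarith
    have hth : s - (1059/1000 : ℝ) ≤ (41/1000 : ℝ) := by linarith
    have hp1 := pow_le_pow_left₀ ht0 hth 1
    have hp2 := pow_le_pow_left₀ ht0 hth 2
    have hn3 := pow_nonneg ht0 3
    have hn4 := pow_nonneg ht0 4
    have hn5 := pow_nonneg ht0 5
    have hn6 := pow_nonneg ht0 6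
    have hn7 := pow_nonneg ht0 7
    have hn8 := pow_nonneg ht0 8
    have hn9 := pow_nonneg ht0 9
    have hn10 := pow_nonneg ht0 10
    nlinarith [hp1, hp2, hn3, hn4, hn5, hn6, hn7, hn8, hn9, hn10]

lemma certC2 : ∀ s : ℝ, (11/10 : ℝ) ≤ s → s ≤ (23/20 : ℝ) → 0 < RD s := by
  intro s h1 h2
  simp only [RP, RD]
  have ht0 : (0:ℝ) ≤ s - (11/10 : ℝ) := by linarith
  have hth : s - (11/10 : ℝ) ≤ (1/20 : ℝ) := by linarith
  have hp1 := pow_le_pow_left₀ ht0 hth 1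
  have hp2 := pow_le_pow_left₀ ht0 hth 2
  have hp3 := pow_le_pow_left₀ ht0 hth 3
  have hp4 := pow_le_pow_left₀ ht0 hth 4
  have hp5 := pow_le_pow_left₀ ht0 hth 5
  have hp6 := pow_le_pow_left₀ ht0 hth 6
  have hp7 := pow_le_pow_left₀ ht0 hth 7
  have hp8 := pow_le_pow_left₀ ht0 hth 8
  have hp9 := pow_le_pow_left₀ ht0 hth 9
  nlinarith [hp1, hp2, hp3, hp4, hp5, hp6, hp7, hp8, hp9]

lemma certC3 : ∀ s : ℝ, (23/20 : ℝ) ≤ s → s ≤ (119/100 : ℝ) → 0 < RP s := by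
  intro s h1 h2
  simp only [RP, RD]
  rcases le_or_gt s (237/200 : ℝ) with hc | hc
  · have ht0 : (0:ℝ) ≤ s - (23/20 : ℝ) := by linarith
    have hth : s - (23/20 : ℝ) ≤ (7/200 : ℝ) := by linarith
    have hn1 := pow_nonneg ht0 1
    have hp2 := pow_le_pow_left₀ ht0 hth 2
    have hp3 := pow_le_pow_left₀ ht0 hth 3
    have hp4 := pow_le_pow_left₀ ht0 hth 4
    have hp5 := pow_le_pow_left₀ ht0 hth 5
    have hp6 := pow_le_pow_left₀ ht0 hth 6
    have hp7 := pow_le_pow_left₀ ht0 hth 7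
    have hp8 := pow_le_pow_left₀ ht0 hth 8
    have hp9 := pow_le_pow_left₀ ht0 hth 9
    have hp10 := pow_le_pow_left₀ ht0 hth 10
    nlinarith [hn1, hp2, hp3, hp4, hp5, hp6, hp7, hp8, hp9, hp10]
  · have ht0 : (0:ℝ) ≤ s - (237/200 : ℝ) := by linarith
    have hth : s - (237/200 : ℝ) ≤ (1/200 : ℝ) := by linarith
    have hp1 := pow_le_pow_left₀ ht0 hth 1
    have hp2 := pow_le_pow_left₀ ht0 hth 2
    have hp3 := pow_le_pow_left₀ ht0 hth 3
    have hp4 := pow_le_pow_left₀ ht0 hth 4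
    have hp5 := pow_le_pow_left₀ ht0 hth 5
    have hp6 := pow_le_pow_left₀ ht0 hth 6
    have hp7 := pow_le_pow_left₀ ht0 hth 7
    have hp8 := pow_le_pow_left₀ ht0 hth 8
    have hp9 := pow_le_pow_left₀ ht0 hth 9
    have hp10 := pow_le_pow_left₀ ht0 hth 10
    nlinarith [hp1, hp2, hp3, hp4, hp5, hp6, hp7, hp8, hp9, hp10]

lemma certC4 : ∀ s : ℝ, (119/100 : ℝ) ≤ s → s ≤ (123/100 : ℝ) → RD s < 0 := by
  intro s h1 h2
  simp only [RP, RD]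
  have ht0 : (0:ℝ) ≤ s - (119/100 : ℝ) := by linarith
  have hth : s - (119/100 : ℝ) ≤ (1/25 : ℝ) := by linarith
  have hn1 := pow_nonneg ht0 1
  have hn2 := pow_nonneg ht0 2
  have hn3 := pow_nonneg ht0 3
  have hn4 := pow_nonneg ht0 4
  have hn5 := pow_nonneg ht0 5
  have hn6 := pow_nonneg ht0 6
  have hn7 := pow_nonneg ht0 7
  have hn8 := pow_nonneg ht0 8
  have hn9 := pow_nonneg ht0 9
  nlinarith [hn1, hn2, hn3, hn4, hn5, hn6, hn7, hn8, hn9]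

lemma certQneg : ∀ s : ℝ, (11/10 : ℝ) ≤ s → s ≤ (121/100 : ℝ) → 3*s^4 - 1914/125*s + 12 < 0 := by
  intro s h1 h2
  rcases le_or_gt s (1207/1000 : ℝ) with hc | hc
  · have ht0 : (0:ℝ) ≤ s - (11/10 : ℝ) := by linarith
    have hth : s - (11/10 : ℝ) ≤ (107/1000 : ℝ) := by linarith
    have hp1 := pow_le_pow_left₀ ht0 hth 1
    have hp2 := pow_le_pow_left₀ ht0 hth 2
    have hp3 := pow_le_pow_left₀ ht0 hth 3
    have hp4 := pow_le_pow_left₀ ht0 hth 4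
    nlinarith [hp1, hp2, hp3, hp4]
  · have ht0 : (0:ℝ) ≤ s - (1207/1000 : ℝ) := by linarith
    have hth : s - (1207/1000 : ℝ) ≤ (3/1000 : ℝ) := by linarith
    have hp1 := pow_le_pow_left₀ ht0 hth 1
    have hp2 := pow_le_pow_left₀ ht0 hth 2
    have hp3 := pow_le_pow_left₀ ht0 hth 3
    have hp4 := pow_le_pow_left₀ ht0 hth 4
    nlinarith [hp1, hp2, hp3, hp4]

lemma q2pos : ∀ s : ℝ, 0 ≤ s → 0 < 2*s^4 - 522/125*s + 3 := by
  intro s hs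
  nlinarith [mul_nonneg (sq_nonneg (s - 81/100))
    (by positivity : (0:ℝ) ≤ (s + 81/100)^2 + 2*(81/100)^2), hs]

lemma qpos_low : ∀ s : ℝ, 0 ≤ s → s ≤ 9/10 → 0 < 3*s^4 - 1914/125*s + 12 := by
  intro s hs hs'
  nlinarith [mul_nonneg (sq_nonneg (s - 21/25))
    (by positivity : (0:ℝ) ≤ (s + 21/25)^2 + 2*(21/25)^2), hs, hs']

lemma qpos_high : ∀ s : ℝ, 123/100 ≤ s → 0 < 3*s^4 - 1914/125*s + 12 := by
  intro s hs
  nlinarith [mul_nonneg (sq_nonneg (s - 123/100))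
    (by positivity : (0:ℝ) ≤ (s + 123/100)^2 + 2*(123/100)^2), hs]

lemma RP_hasDeriv (x : ℝ) : HasDerivAt RP (RD x) x := by
  have h1 := ((hasDerivAt_id x).const_mul (5268024/1953125 : ℝ))
  have h2 := ((hasDerivAt_pow 2 x).const_mul (9 : ℝ))
  have h3 := ((hasDerivAt_pow 3 x).const_mul (3306/125 : ℝ))
  have h4 := ((hasDerivAt_pow 4 x).const_mul (333036/15625 : ℝ))
  have h6 := ((hasDerivAt_pow 6 x).const_mul (8 : ℝ))
  have h7 := ((hasDerivAt_pow 7 x).const_mul (696/125 : ℝ))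
  have h10 := (hasDerivAt_pow 10 x)
  have h := ((((((((hasDerivAt_const x (30276/15625 : ℝ)).sub h1).add h2).sub h3).add h4).sub h6).add h7).sub h10)
  have e2 : RD x = -5268024/1953125 + (9:ℝ)*(2*x^1) - 3306/125*(3*x^2) + 333036/15625*(4*x^3)
      - 8*(6*x^5) + 696/125*(7*x^6) - 10*x^9 := by unfold RD; push_cast; ring
  rw [e2] at *
  convert h using 2
  · rfl
  · rfl
  · funext y; simp only [RP, Pi.sub_apply, Pi.add_apply, id]
  · push_cast; ring
  · push_cast; ring

lemma RP_cont : Continuous RP := by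
  unfold RP; continuity

lemma RP_mono : StrictMonoOn RP (Set.Icc (11/10 : ℝ) (23/20)) := by
  apply strictMonoOn_of_deriv_pos (convex_Icc _ _) RP_cont.continuousOn
  intro x hx
  rw [interior_Icc] at hx
  rw [(RP_hasDeriv x).deriv]
  exact certC2 x hx.1.le hx.2.le

lemma RP_anti : StrictAntiOn RP (Set.Icc (119/100 : ℝ) (123/100)) := by
  apply strictAntiOn_of_deriv_neg (convex_Icc _ _) RP_cont.continuousOn
  intro x hx
  rw [interior_Icc] at hx
  rw [(RP_hasDeriv x).deriv]
  exact certC4 x hx.1.le hx.2.le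

/-- forward reduction: an asymmetric positive solution yields a root of RP
    together with side conditions. -/
lemma k18_forward (x y : ℝ) (hx : 0 < x) (hy : 0 < y) (hne : x ≠ y)
    (e1 : x^5 + 174/125*y^2 - y = 0) (e2 : y^5 + 174/125*x^2 - x = 0) :
    RP (x+y) = 0 ∧
    x*y*(5*(x+y)^3 - 174/125) = 2*(x+y)^5 - 522/125*(x+y)^2 + 3*(x+y) ∧
    0 < 5*(x+y)^3 - 174/125 ∧
    3*(x+y)^4 - 1914/125*(x+y) + 12 < 0 := by
  have hsub : x - y ≠ 0 := sub_ne_zero.mpr hne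
  have hQ0 : (x - y) * (x^4 + x^3*y + x^2*y^2 + x*y^3 + y^4 + 1 - 174/125*(x+y)) = 0 := by
    linear_combination e1 - e2
  have hQ : x^4 + x^3*y + x^2*y^2 + x*y^3 + y^4 + 1 - 174/125*(x+y) = 0 :=
    (mul_eq_zero.mp hQ0).resolve_left hsub
  have hA : (x+y)^4 - 3*(x+y)^2*(x*y) + (x*y)^2 + 1 - 174/125*(x+y) = 0 := by
    linear_combination hQ
  have hB : (x+y)^5 - 5*(x+y)^3*(x*y) + 5*(x+y)*(x*y)^2 - (x+y) + 174/125*(x+y)^2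
      - 348/125*(x*y) = 0 := by
    linear_combination e1 + e2
  have hpC : x*y*(5*(x+y)^3 - 174/125) = 2*(x+y)^5 - 522/125*(x+y)^2 + 3*(x+y) := by
    linear_combination (1/2)*hB - (5*(x+y)/2)*hA
  have hs0 : 0 < x + y := by linarith
  have hq2 := q2pos (x+y) hs0.le
  have hBn : 0 < 2*(x+y)^5 - 522/125*(x+y)^2 + 3*(x+y) := by
    nlinarith [mul_pos hs0 hq2]
  have hp : 0 < x*y := mul_pos hx hy
  have hC : 0 < 5*(x+y)^3 - 174/125 := by nlinarith [hpC, hBn, hp]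
  have hkey : (x-y)^2*(5*(x+y)^3 - 174/125)
      = -((x+y)*(3*(x+y)^4 - 1914/125*(x+y) + 12)) := by
    linear_combination (-4)*hpC
  have hd2 : 0 < (x-y)^2 := by positivity
  have hq : 3*(x+y)^4 - 1914/125*(x+y) + 12 < 0 := by
    nlinarith [mul_pos hd2 hC, hs0]
  have hR : RP (x+y) = 0 := by
    unfold RP
    linear_combination ((5*(x+y)^3 - 174/125)^2)*hA
      + (3*(x+y)^2*(5*(x+y)^3 - 174/125) - x*y*(5*(x+y)^3 - 174/125)
         - (2*(x+y)^5 - 522/125*(x+y)^2 + 3*(x+y)))*hpC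
  exact ⟨hR, hpC, hC, hq⟩

/-- backward: from sum/product data satisfying A and B, the pair solves the system. -/
lemma k18_pair (s p x y : ℝ) (hsum : x + y = s) (hprod : x*y = p)
    (hA : s^4 - 3*s^2*p + p^2 + 1 - 174/125*s = 0)
    (hB : s^5 - 5*s^3*p + 5*s*p^2 - s + 174/125*s^2 - 348/125*p = 0) :
    x^5 + 174/125*y^2 - y = 0 ∧ y^5 + 174/125*x^2 - x = 0 := by
  subst hsum; subst hprod
  constructor
  · linear_combination (1/2)*hB + ((x-y)/2)*hA
  · linear_combination (1/2)*hB - ((x-y)/2)*hA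

/-- construction of an asymmetric solution pair from a root of RP. -/
lemma k18_build (s : ℝ) (h1 : 11/10 ≤ s) (h2 : s ≤ 121/100) (hz : RP s = 0) :
    ∃ x y : ℝ, 0 < x ∧ 0 < y ∧ x < y ∧ x + y = s ∧
      x*y*(5*s^3 - 174/125) = 2*s^5 - 522/125*s^2 + 3*s ∧
      x^5 + 174/125*y^2 - y = 0 ∧ y^5 + 174/125*x^2 - x = 0 := by
  have hs0 : 0 < s := by linarith
  have hC : 0 < 5*s^3 - 174/125 := by
    nlinarith [pow_le_pow_left₀ (by norm_num : (0:ℝ) ≤ 11/10) h1 3]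
  set p := (2*s^5 - 522/125*s^2 + 3*s)/(5*s^3 - 174/125) with hpdef
  have hpC : p*(5*s^3 - 174/125) = 2*s^5 - 522/125*s^2 + 3*s := by
    rw [hpdef]; exact div_mul_cancel₀ _ (ne_of_gt hC)
  have hq2 := q2pos s hs0.le
  have hBn : 0 < 2*s^5 - 522/125*s^2 + 3*s := by nlinarith [mul_pos hs0 hq2]
  have hp : 0 < p := by rw [hpdef]; exact div_pos hBn hC
  have hA0 : (s^4 - 3*s^2*p + p^2 + 1 - 174/125*s) * (5*s^3 - 174/125)^2 = 0 := by
    have hz' : 30276/15625 - 5268024/1953125*s + 9*s^2 - 3306/125*s^3 + 333036/15625*s^4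
        - 8*s^6 + 696/125*s^7 - s^10 = 0 := hz
    linear_combination hz' + (-3*s^2*(5*s^3 - 174/125) + p*(5*s^3 - 174/125)
      + (2*s^5 - 522/125*s^2 + 3*s))*hpC
  have hA : s^4 - 3*s^2*p + p^2 + 1 - 174/125*s = 0 :=
    (mul_eq_zero.mp hA0).resolve_right (pow_ne_zero 2 (ne_of_gt hC))
  have hB : s^5 - 5*s^3*p + 5*s*p^2 - s + 174/125*s^2 - 348/125*p = 0 := by
    linear_combination (5*s)*hA + 2*hpC
  have hq : 3*s^4 - 1914/125*s + 12 < 0 := certQneg s h1 h2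
  have hkey : (s^2 - 4*p)*(5*s^3 - 174/125) = -(s*(3*s^4 - 1914/125*s + 12)) := by
    linear_combination (-4)*hpC
  have hd : 0 < s^2 - 4*p := by
    by_contra hle
    push_neg at hle
    have h3 : (s^2 - 4*p)*(5*s^3 - 174/125) ≤ 0 :=
      mul_nonpos_of_nonpos_of_nonneg hle hC.le
    rw [hkey] at h3
    nlinarith [mul_pos hs0 (by linarith : (0:ℝ) < -(3*s^4 - 1914/125*s + 12))]
  have hsq : Real.sqrt (s^2 - 4*p) ^ 2 = s^2 - 4*p := Real.sq_sqrt hd.le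
  have hw0 : 0 < Real.sqrt (s^2 - 4*p) := Real.sqrt_pos.mpr hd
  have hws : Real.sqrt (s^2 - 4*p) < s := by
    have h4 : Real.sqrt (s^2 - 4*p) < Real.sqrt (s^2) :=
      Real.sqrt_lt_sqrt hd.le (by linarith)
    rwa [Real.sqrt_sq hs0.le] at h4
  refine ⟨(s - Real.sqrt (s^2 - 4*p))/2, (s + Real.sqrt (s^2 - 4*p))/2,
    by linarith, by linarith, by linarith, by ring, ?_, ?_⟩
  · have hxy : (s - Real.sqrt (s^2 - 4*p))/2 * ((s + Real.sqrt (s^2 - 4*p))/2) = p := by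
      linear_combination (-1/4)*hsq
    rw [hxy]; exact hpC
  · have hxy : (s - Real.sqrt (s^2 - 4*p))/2 * ((s + Real.sqrt (s^2 - 4*p))/2) = p := by
      linear_combination (-1/4)*hsq
    exact k18_pair s p _ _ (by ring) hxy hA hB

/-- two ordered pairs with the same sum, same product, both increasing, coincide. -/
lemma k18_unique (x y x' y' : ℝ) (hxy : x < y) (hxy' : x' < y')
    (hs : x + y = x' + y') (hp : x*y = x'*y') : x = x' ∧ y = y' := by
  have h : (y - x)^2 = (y' - x')^2 := by
    linear_combination (x + y + x' + y')*hs - 4*hp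
  have h2 : y - x = y' - x' := by
    have hpos : 0 < y - x := by linarith
    have hpos' : 0 < y' - x' := by linarith
    nlinarith [h, hpos, hpos']
  constructor <;> linarith

lemma RP_at_11 : RP (11/10) ≤ 0 := by unfold RP; norm_num
lemma RP_at_115 : (0:ℝ) ≤ RP (23/20) := by unfold RP; norm_num
lemma RP_at_119 : (0:ℝ) ≤ RP (119/100) := by unfold RP; norm_num
lemma RP_at_121 : RP (121/100) ≤ 0 := by unfold RP; norm_num


set_option maxHeartbeats 2000000 in
/-- The system of two trinomials `x^5/y + a*y = 1`, `y^5/x + a*x = 1` with `a = 1.392`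
has exactly five positive solutions. -/
theorem stmt_18 :
    {p : ℝ × ℝ | 0 < p.1 ∧ 0 < p.2 ∧
        p.1 ^ 5 / p.2 + (1392 / 1000 : ℝ) * p.2 = 1 ∧
        p.2 ^ 5 / p.1 + (1392 / 1000 : ℝ) * p.1 = 1}.encard = 5 := by
  -- the symmetric root r
  obtain ⟨r, hrIcc, hr⟩ : ∃ u ∈ Set.Icc (0:ℝ) 1, u^4 + 174/125*u = 1 := by
    have hc : ContinuousOn (fun x : ℝ => x^4 + 174/125*x) (Set.Icc 0 1) := by
      apply Continuous.continuousOn; continuity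
    have h := intermediate_value_Icc (by norm_num : (0:ℝ) ≤ 1) hc
    have h1 : (1:ℝ) ∈ Set.Icc ((fun x:ℝ => x^4 + 174/125*x) 0) ((fun x:ℝ => x^4 + 174/125*x) 1) := by
      constructor <;> norm_num
    obtain ⟨u, hu1, hu2⟩ := h h1
    exact ⟨u, hu1, hu2⟩
  have hr0 : 0 < r := by
    rcases lt_or_eq_of_le hrIcc.1 with h | h
    · exact h
    · exfalso; rw [← h] at hr; norm_num at hr
  -- the two roots of RP
  obtain ⟨s1, hs1Icc, hs1⟩ : ∃ s ∈ Set.Icc (11/10:ℝ) (23/20), RP s = 0 := by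
    have h := intermediate_value_Icc (by norm_num : (11/10:ℝ) ≤ 23/20) RP_cont.continuousOn
    have h1 : (0:ℝ) ∈ Set.Icc (RP (11/10)) (RP (23/20)) := by
      constructor
      · exact RP_at_11
      · exact RP_at_115
    obtain ⟨s, hs, hz⟩ := h h1
    exact ⟨s, hs, hz⟩
  obtain ⟨s2, hs2Icc, hs2⟩ : ∃ s ∈ Set.Icc (119/100:ℝ) (121/100), RP s = 0 := by
    have h := intermediate_value_Icc' (by norm_num : (119/100:ℝ) ≤ 121/100) RP_cont.continuousOn
    have h1 : (0:ℝ) ∈ Set.Icc (RP (121/100)) (RP (119/100)) := by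
      constructor
      · exact RP_at_121
      · exact RP_at_119
    obtain ⟨s, hs, hz⟩ := h h1
    exact ⟨s, hs, hz⟩
  have hs1lo := hs1Icc.1
  have hs1hi := hs1Icc.2
  have hs2lo := hs2Icc.1
  have hs2hi := hs2Icc.2
  -- the two asymmetric pairs
  obtain ⟨x1, y1, hx1, hy1, hxy1, hsum1, hprod1, e11, e12⟩ :=
    k18_build s1 hs1lo (by linarith) hs1
  obtain ⟨x2, y2, hx2, hy2, hxy2, hsum2, hprod2, e21, e22⟩ :=
    k18_build s2 (by linarith) hs2hi hs2
  have hC1pos : (0:ℝ) < 5*s1^3 - 174/125 := by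
    nlinarith [pow_le_pow_left₀ (by norm_num : (0:ℝ) ≤ 11/10) hs1lo 3]
  have hC2pos : (0:ℝ) < 5*s2^3 - 174/125 := by
    nlinarith [pow_le_pow_left₀ (by norm_num : (0:ℝ) ≤ 119/100) hs2lo 3]
  have hsum12 : x1 + y1 ≠ x2 + y2 := by
    rw [hsum1, hsum2]; intro h; linarith
  -- classification of all positive solutions
  have classify : ∀ x y : ℝ, 0 < x → 0 < y →
      x^5/y + 1392/1000*y = 1 → y^5/x + 1392/1000*x = 1 →
      (x = r ∧ y = r) ∨ (x = x1 ∧ y = y1) ∨ (x = y1 ∧ y = x1) ∨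
      (x = x2 ∧ y = y2) ∨ (x = y2 ∧ y = x2) := by
    intro x y hx hy E1 E2
    have hxne := ne_of_gt hx
    have hyne := ne_of_gt hy
    have e1 : x^5 + 174/125*y^2 - y = 0 := by
      field_simp at E1
      linear_combination (1/1000)*E1
    have e2 : y^5 + 174/125*x^2 - x = 0 := by
      field_simp at E2
      linear_combination (1/1000)*E2
    have hforward : ∀ u v : ℝ, 0 < u → 0 < v → u < v →
        u^5 + 174/125*v^2 - v = 0 → v^5 + 174/125*u^2 - u = 0 →
        (u = x1 ∧ v = y1) ∨ (u = x2 ∧ v = y2) := by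
      intro u v hu hv huv f1 f2
      obtain ⟨hR, hpC, hC, hq⟩ := k18_forward u v hu hv (ne_of_lt huv) f1 f2
      have hs0 : (0:ℝ) < u + v := by linarith
      have hlow : (9:ℝ)/10 < u + v := by
        by_contra hle
        push_neg at hle
        have := qpos_low (u+v) hs0.le hle
        linarith
      have hhigh : u + v < 123/100 := by
        by_contra hle
        push_neg at hle
        have := qpos_high (u+v) hle
        linarith
      have hseq : u + v = s1 ∨ u + v = s2 := by
        rcases le_or_gt (u+v) (11/10) with h | h
        · exact absurd hR (ne_of_lt (certC1 (u+v) (by linarith) h))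
        rcases le_or_gt (u+v) (23/20) with h' | h'
        · left
          exact RP_mono.injOn ⟨h.le, h'⟩ ⟨hs1lo, hs1hi⟩ (by rw [hR, hs1])
        rcases le_or_gt (u+v) (119/100) with h'' | h''
        · exact absurd hR (ne_of_gt (certC3 (u+v) h'.le h''))
        · right
          exact RP_anti.injOn ⟨h''.le, by linarith⟩ ⟨hs2lo, by linarith⟩ (by rw [hR, hs2])
      rcases hseq with h | h
      · left
        rw [h] at hpC
        have hprodeq : u*v = x1*y1 :=
          mul_right_cancel₀ (ne_of_gt hC1pos) (hpC.trans hprod1.symm)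
        have hsumeq : u + v = x1 + y1 := by rw [h, hsum1]
        obtain ⟨hh1, hh2⟩ := k18_unique u v x1 y1 huv hxy1 hsumeq hprodeq
        exact ⟨hh1, hh2⟩
      · right
        rw [h] at hpC
        have hprodeq : u*v = x2*y2 :=
          mul_right_cancel₀ (ne_of_gt hC2pos) (hpC.trans hprod2.symm)
        have hsumeq : u + v = x2 + y2 := by rw [h, hsum2]
        obtain ⟨hh1, hh2⟩ := k18_unique u v x2 y2 huv hxy2 hsumeq hprodeq
        exact ⟨hh1, hh2⟩
    rcases lt_trichotomy x y with hlt | heq | hgt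
    · rcases hforward x y hx hy hlt e1 e2 with ⟨h1, h2⟩ | ⟨h1, h2⟩
      · exact Or.inr (Or.inl ⟨h1, h2⟩)
      · exact Or.inr (Or.inr (Or.inr (Or.inl ⟨h1, h2⟩)))
    · left
      subst heq
      have hfac : x*(x^4 + 174/125*x - 1) = 0 := by linear_combination e1
      have hx4 : x^4 + 174/125*x = 1 := by
        have := (mul_eq_zero.mp hfac).resolve_left hxne
        linarith [this]
      have hxr : x = r := by
        have hfac2 : (x - r)*(x^3 + x^2*r + x*r^2 + r^3 + 174/125) = 0 := by
          linear_combination hx4 - hr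
        have hpos : (0:ℝ) < x^3 + x^2*r + x*r^2 + r^3 + 174/125 := by
          nlinarith [pow_pos hx 3, mul_pos (mul_pos hx hx) hr0,
            mul_pos hx (mul_pos hr0 hr0), pow_pos hr0 3]
        have := (mul_eq_zero.mp hfac2).resolve_right (ne_of_gt hpos)
        linarith [sub_eq_zero.mp this]
      exact ⟨hxr, hxr⟩
    · rcases hforward y x hy hx hgt e2 e1 with ⟨h1, h2⟩ | ⟨h1, h2⟩
      · exact Or.inr (Or.inr (Or.inl ⟨h2, h1⟩))
      · exact Or.inr (Or.inr (Or.inr (Or.inr ⟨h2, h1⟩)))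
  -- membership of the five points
  have hmem : ∀ x y : ℝ, 0 < x → 0 < y → x^5 + 174/125*y^2 - y = 0 →
      y^5 + 174/125*x^2 - x = 0 →
      (0 < x ∧ 0 < y ∧ x^5/y + (1392/1000:ℝ)*y = 1 ∧ y^5/x + (1392/1000:ℝ)*x = 1) := by
    intro x y hx hy f1 f2
    refine ⟨hx, hy, ?_, ?_⟩
    · rw [div_add' _ _ _ (ne_of_gt hy), div_eq_iff (ne_of_gt hy)]
      linear_combination f1
    · rw [div_add' _ _ _ (ne_of_gt hx), div_eq_iff (ne_of_gt hx)]
      linear_combination f2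
  have hrmem : (0:ℝ) < r ∧ (0:ℝ) < r ∧ r^5/r + (1392/1000:ℝ)*r = 1 ∧
      r^5/r + (1392/1000:ℝ)*r = 1 := by
    have e : r^5 + 174/125*r^2 - r = 0 := by linear_combination r*hr
    obtain ⟨a1, a2, a3, a4⟩ := hmem r r hr0 hr0 e e
    exact ⟨a1, a2, a3, a4⟩
  -- the set equality
  have hSet : {p : ℝ × ℝ | 0 < p.1 ∧ 0 < p.2 ∧
        p.1 ^ 5 / p.2 + (1392 / 1000 : ℝ) * p.2 = 1 ∧
        p.2 ^ 5 / p.1 + (1392 / 1000 : ℝ) * p.1 = 1} =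
      {((r:ℝ),(r:ℝ)), (x1,y1), (y1,x1), (x2,y2), (y2,x2)} := by
    ext ⟨x, y⟩
    simp only [Set.mem_setOf_eq, Set.mem_insert_iff, Set.mem_singleton_iff, Prod.mk.injEq]
    constructor
    · rintro ⟨hx, hy, E1, E2⟩
      exact classify x y hx hy E1 E2
    · rintro (⟨rfl, rfl⟩ | ⟨rfl, rfl⟩ | ⟨rfl, rfl⟩ | ⟨rfl, rfl⟩ | ⟨rfl, rfl⟩)
      · exact hrmem
      · exact hmem _ _ hx1 hy1 e11 e12
      · exact hmem _ _ hy1 hx1 e12 e11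
      · exact hmem _ _ hx2 hy2 e21 e22
      · exact hmem _ _ hy2 hx2 e22 e21
  rw [hSet]
  -- distinctness
  have nrx1 : ((r,r) : ℝ×ℝ) ≠ (x1,y1) := by
    intro h; rw [Prod.mk.injEq] at h; exact (ne_of_lt hxy1) (h.1.symm.trans h.2)
  have nry1 : ((r,r) : ℝ×ℝ) ≠ (y1,x1) := by
    intro h; rw [Prod.mk.injEq] at h; exact (ne_of_lt hxy1) (h.2.symm.trans h.1)
  have nrx2 : ((r,r) : ℝ×ℝ) ≠ (x2,y2) := by
    intro h; rw [Prod.mk.injEq] at h; exact (ne_of_lt hxy2) (h.1.symm.trans h.2)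
  have nry2 : ((r,r) : ℝ×ℝ) ≠ (y2,x2) := by
    intro h; rw [Prod.mk.injEq] at h; exact (ne_of_lt hxy2) (h.2.symm.trans h.1)
  have n11 : ((x1,y1) : ℝ×ℝ) ≠ (y1,x1) := by
    intro h; rw [Prod.mk.injEq] at h; exact (ne_of_lt hxy1) h.1
  have n12 : ((x1,y1) : ℝ×ℝ) ≠ (x2,y2) := by
    intro h; rw [Prod.mk.injEq] at h; exact hsum12 (by rw [h.1, h.2])
  have n12' : ((x1,y1) : ℝ×ℝ) ≠ (y2,x2) := by
    intro h; rw [Prod.mk.injEq] at h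
    exact hsum12 (by rw [h.1, h.2]; ring)
  have n21 : ((y1,x1) : ℝ×ℝ) ≠ (x2,y2) := by
    intro h; rw [Prod.mk.injEq] at h
    exact hsum12 (by rw [← h.1, ← h.2]; ring)
  have n21' : ((y1,x1) : ℝ×ℝ) ≠ (y2,x2) := by
    intro h; rw [Prod.mk.injEq] at h
    exact hsum12 (by rw [← h.2, ← h.1])
  have n22 : ((x2,y2) : ℝ×ℝ) ≠ (y2,x2) := by
    intro h; rw [Prod.mk.injEq] at h; exact (ne_of_lt hxy2) h.1
  rw [Set.encard_insert_of_notMem (by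
    simp only [Set.mem_insert_iff, Set.mem_singleton_iff]
    rintro (h | h | h | h)
    exacts [nrx1 h, nry1 h, nrx2 h, nry2 h])]
  rw [Set.encard_insert_of_notMem (by
    simp only [Set.mem_insert_iff, Set.mem_singleton_iff]
    rintro (h | h | h)
    exacts [n11 h, n12 h, n12' h])]
  rw [Set.encard_insert_of_notMem (by
    simp only [Set.mem_insert_iff, Set.mem_singleton_iff]
    rintro (h | h)
    exacts [n21 h, n21' h])]
  rw [Set.encard_pair n22]
  rfl
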